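/- arXiv:1910.07292 — 3 statements merged into one kernel-verified Lean document; each statement's English description precedes it below -/
import Mathlib

section
/- If a set Γₙ of n-orders has a certificate, then it has a finite certificate. -/
/-- A finite labeled order: a partial order structure on `Fin n`. -/
abbrev FinOrd (n : ℕ) := PartialOrder (Fin n)

/-- Isomorphism of two orders on `Fin n`. -/
def OrdIso {n : ℕ} (p q : FinOrd n) : Prop :=
  Nonempty (p.le ≃r q.le)

instance ordSetoid (n : ℕ) : Setoid (FinOrd n) where
  r := OrdIso
  iseqv := by
    refine ⟨fun p => ⟨RelIso.refl _⟩, ?_, ?_⟩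
    · rintro p q ⟨e⟩; exact ⟨e.symm⟩
    · rintro p q r ⟨e⟩ ⟨f⟩; exact ⟨e.trans f⟩

/-- An `n`-order: an isomorphism class of partial orders of cardinality `n`. -/
def NOrder (n : ℕ) := Quotient (ordSetoid n)

/-- `B` (a partial order on `Fin n`) occurs as a stem (finite downward-closed
subcauset) in the partial order `p` on `α`. -/
def StemIn {n : ℕ} {α : Type*} (B : FinOrd n) (p : PartialOrder α) : Prop :=
  ∃ f : Fin n → α, Function.Injective f ∧
    (∀ i j : Fin n, B.le i j ↔ p.le (f i) (f j)) ∧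
    (∀ (i : Fin n) (y : α), p.lt y (f i) → ∃ j : Fin n, f j = y)

/-- The `n`-order `B` is a stem in the order `p`. -/
def QStemIn {n : ℕ} {α : Type*} (B : NOrder n) (p : PartialOrder α) : Prop :=
  ∃ b : FinOrd n, ⟦b⟧ = B ∧ StemIn b p

/-- The set of `k`-stems of `p`, as a set of `k`-orders. -/
def stems (k : ℕ) {α : Type*} (p : PartialOrder α) : Set (NOrder k) :=
  {B | QStemIn B p}

/-- Stem relation between unlabeled finite orders: `S` is a stem in `T`. -/
def NStemIn {n m : ℕ} (S : NOrder n) (T : NOrder m) : Prop :=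
  ∃ t : FinOrd m, ⟦t⟧ = T ∧ QStemIn S t

/-- An order is past-finite if every element has finitely many elements below it. -/
def PastFinite {α : Type*} (p : PartialOrder α) : Prop :=
  ∀ x : α, {y : α | p.lt y x}.Finite

/-- The operation sending a set of `n`-orders to the set of `(n-1)`-stems of its
elements. -/
def Ominus (n : ℕ) (Γ : Set (NOrder n)) : Set (NOrder (n - 1)) :=
  {B | ∃ A ∈ Γ, NStemIn B A}

/-- The `j`-fold iterate of `Ominus`. -/
def OminusIter : (j : ℕ) → (n : ℕ) → Set (NOrder n) → Set (NOrder (n - j))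
  | 0, _, Γ => Γ
  | j + 1, n, Γ => Ominus (n - j) (OminusIter j n Γ)

/-- `Γ` is a node of covtree at level `n`: it is nonempty and has a certificate,
i.e. a (finite or countably infinite) past-finite order whose set of `n`-stems
is exactly `Γ`. -/
def IsNode (n : ℕ) (Γ : Set (NOrder n)) : Prop :=
  Γ.Nonempty ∧ ∃ (α : Type) (p : PartialOrder α), Countable α ∧ PastFinite p ∧
    stems n p = Γ


instance finOrdFinite (n : ℕ) : Finite (FinOrd n) := by
  refine Finite.of_injective (fun p : FinOrd n => p.le) ?_
  intro p q h
  exact PartialOrder.ext (fun a b => iff_of_eq (congrFun (congrFun h a) b))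

instance nOrderFinite (n : ℕ) : Finite (NOrder n) := Quotient.finite _

/-- If a nonempty set `Γ` of `n`-orders has a certificate (a
countable past-finite order whose set of `n`-stems is exactly `Γ`), then it has
a finite certificate. -/
theorem exists_finite_certificate {n : ℕ} (Γ : Set (NOrder n)) (hne : Γ.Nonempty)
    (hcert : ∃ (α : Type) (p : PartialOrder α), Countable α ∧ PastFinite p ∧
      stems n p = Γ) :
    ∃ (m : ℕ) (q : FinOrd m), stems n q = Γ := by
  classical
  obtain ⟨α, p, _hcnt, hpf, hstems⟩ := hcert
  letI := p
  -- choose witnesses for each element of Γ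
  have hwit : ∀ B ∈ Γ, ∃ f : Fin n → α, Function.Injective f ∧
      (∃ b : FinOrd n, ⟦b⟧ = B ∧ (∀ i j : Fin n, b.le i j ↔ p.le (f i) (f j))) ∧
      (∀ (i : Fin n) (y : α), p.lt y (f i) → ∃ j : Fin n, f j = y) := by
    intro B hB
    rw [← hstems] at hB
    obtain ⟨b, hb, f, hinj, hiff, hdc⟩ := hB
    exact ⟨f, hinj, ⟨b, hb, hiff⟩, hdc⟩
  choose f hfinj hfiso hfdc using hwit
  -- the finite downward-closed set U
  haveI : Finite Γ := (Set.toFinite Γ).to_subtype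
  set U : Set α := ⋃ B : Γ, Set.range (f B B.2) with hU
  have hUfin : U.Finite := Set.finite_iUnion (fun B => Set.finite_range _)
  have hUdc : ∀ x ∈ U, ∀ y : α, p.lt y x → y ∈ U := by
    intro x hx y hy
    obtain ⟨B, ⟨i, rfl⟩⟩ := Set.mem_iUnion.1 hx
    obtain ⟨j, hj⟩ := hfdc B.1 B.2 i y hy
    exact Set.mem_iUnion.2 ⟨B, ⟨j, hj⟩⟩
  haveI := hUfin.fintype
  set m := Fintype.card U with hm
  set e : Fin m ≃ U := (Fintype.equivFin U).symm with he
  have hecoe : Function.Injective (fun i : Fin m => ((e i : U) : α)) :=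
    Subtype.val_injective.comp e.injective
  set q : FinOrd m := PartialOrder.lift (fun i : Fin m => ((e i : U) : α)) hecoe with hq
  have hqle : ∀ a b : Fin m, q.le a b ↔ p.le ((e a : U) : α) ((e b : U) : α) :=
    fun a b => Iff.rfl
  have hqlt : ∀ a b : Fin m, q.lt a b ↔ p.lt ((e a : U) : α) ((e b : U) : α) :=
    fun a b => Iff.rfl
  refine ⟨m, q, ?_⟩
  apply Set.Subset.antisymm
  · -- stems of q are stems of p, hence in Γ
    rintro B ⟨b, hb, g, hginj, hgiff, hgdc⟩
    rw [← hstems]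
    refine ⟨b, hb, fun i => ((e (g i) : U) : α), hecoe.comp hginj, ?_, ?_⟩
    · intro i j
      rw [hgiff i j]
      exact hqle _ _
    · intro i y hy
      have hyU : y ∈ U := hUdc _ (e (g i)).2 y hy
      have hlt : q.lt (e.symm ⟨y, hyU⟩) (g i) := by
        rw [hqlt]
        simpa using hy
      obtain ⟨j, hj⟩ := hgdc i _ hlt
      refine ⟨j, ?_⟩
      show ((e (g j) : U) : α) = y
      rw [hj]
      simp
  · -- every element of Γ is a stem of q
    intro B hB
    obtain ⟨b, hb, hiff⟩ := hfiso B hB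
    have hrange : ∀ i : Fin n, f B hB i ∈ U :=
      fun i => Set.mem_iUnion.2 ⟨⟨B, hB⟩, ⟨i, rfl⟩⟩
    set g : Fin n → Fin m := fun i => e.symm ⟨f B hB i, hrange i⟩ with hg
    have hgcoe : ∀ i, ((e (g i) : U) : α) = f B hB i := by
      intro i; simp [hg]
    refine ⟨b, hb, g, ?_, ?_, ?_⟩
    · intro i j hij
      have := congrArg (fun x : Fin m => ((e x : U) : α)) hij
      simp only [hgcoe] at this
      exact hfinj B hB this
    · intro i j
      rw [hiff i j, hqle]
      rw [hgcoe, hgcoe]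
    · intro i y hy
      rw [hqlt, hgcoe] at hy
      obtain ⟨j, hj⟩ := hfdc B hB i _ hy
      refine ⟨j, ?_⟩
      apply e.injective
      apply Subtype.val_injective
      rw [hgcoe]
      exact hj
end

section
/- Let Γₙ = {A¹, …, Aᵏ} be a set of n-orders with a certificate. If C is a minimal certificate of Γₙ, then n ≤ |C| ≤ k·n; moreover |C| = n if and only if k = 1. -/
variable {α : Type*}

def IsStemEmbedding {n : ℕ} (B : FinOrd n) (p : PartialOrder α) (f : Fin n → α) : Prop :=
  Function.Injective f ∧ (∀ i j : Fin n, B.le i j ↔ p.le (f i) (f j)) ∧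
    ∀ (i : Fin n) (y : α), p.lt y (f i) → ∃ j : Fin n, f j = y

theorem lt_iff_lt_of_forall_le_iff_le {β : Type*} {q : PartialOrder β} {p : PartialOrder α}
    {g : β → α} (h : ∀ i j, q.le i j ↔ p.le (g i) (g j)) (i j : β) :
    q.lt i j ↔ p.lt (g i) (g j) := by
  rw [@lt_iff_le_not_ge _ q.toPreorder, @lt_iff_le_not_ge _ p.toPreorder, h, h]

namespace IsStemEmbedding

variable {n l : ℕ} {B : FinOrd n} {q : FinOrd l} {p : PartialOrder α} {f : Fin n → Fin l}
  {g : Fin l → α}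

theorem comp (hf : IsStemEmbedding B q f) (hg : IsStemEmbedding q p g) :
    IsStemEmbedding B p (g ∘ f) := by
  obtain ⟨hf_inj, hf_le, hf_down⟩ := hf
  obtain ⟨hg_inj, hg_le, hg_down⟩ := hg
  refine ⟨hg_inj.comp hf_inj, fun i j => (hf_le i j).trans (hg_le _ _), fun i y hy => ?_⟩
  obtain ⟨y', rfl⟩ := hg_down (f i) y hy
  obtain ⟨j, rfl⟩ := hf_down i y' ((lt_iff_lt_of_forall_le_iff_le hg_le _ _).2 hy)
  exact ⟨j, rfl⟩

theorem of_comp (hg_inj : Function.Injective g) (hg_le : ∀ i j, q.le i j ↔ p.le (g i) (g j))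
    (h : IsStemEmbedding B p (g ∘ f)) : IsStemEmbedding B q f := by
  obtain ⟨h_inj, h_le, h_down⟩ := h
  refine ⟨h_inj.of_comp, fun i j => (h_le i j).trans (hg_le _ _).symm, fun i y hy => ?_⟩
  obtain ⟨j, hj⟩ := h_down i (g y) ((lt_iff_lt_of_forall_le_iff_le hg_le _ _).1 hy)
  exact ⟨j, hg_inj hj⟩

theorem stemIn {p : PartialOrder α} {f : Fin n → α} (h : IsStemEmbedding B p f) : StemIn B p :=
  ⟨f, h⟩

end IsStemEmbedding

section StemIn

variable {n l : ℕ} {B : FinOrd n} {q : FinOrd l} {p : PartialOrder α}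

theorem StemIn.card_le [Fintype α] (h : StemIn B p) : n ≤ Fintype.card α := by
  obtain ⟨f, hf_inj, -⟩ := h
  simpa using Fintype.card_le_of_injective f hf_inj

theorem StemIn.trans (hBq : StemIn B q) (hqp : StemIn q p) : StemIn B p := by
  obtain ⟨f, hf⟩ := hBq
  obtain ⟨g, hg⟩ := hqp
  exact IsStemEmbedding.stemIn (IsStemEmbedding.comp hf hg)

theorem stems_subset_of_stemIn (h : StemIn q p) : stems n q ⊆ stems n p :=
  fun _ ⟨b, hb, hbq⟩ => ⟨b, hb, hbq.trans h⟩

theorem stems_eq_singleton (C : FinOrd n) : stems n C = {(⟦C⟧ : NOrder n)} := by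
  ext B
  constructor
  · rintro ⟨b, rfl, f, hf_inj, hf_le, -⟩
    exact Quotient.sound
      ⟨⟨Equiv.ofBijective f hf_inj.bijective_of_finite, (hf_le _ _).symm⟩⟩
  · rintro rfl
    exact ⟨C, rfl, id, Function.injective_id, fun _ _ => Iff.rfl, fun _ y _ => ⟨y, rfl⟩⟩

end StemIn

section Induced

variable {n : ℕ} {p : PartialOrder α} {S : Finset α}

noncomputable def finsetEnum (S : Finset α) : Fin S.card → α := fun i => S.equivFin.symm i

theorem finsetEnum_injective : Function.Injective (finsetEnum S) :=
  Subtype.val_injective.comp S.equivFin.symm.injective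

noncomputable abbrev inducedFinOrd (p : PartialOrder α) (S : Finset α) : FinOrd S.card :=
  PartialOrder.lift (finsetEnum S) finsetEnum_injective

theorem isStemEmbedding_inducedFinOrd (hS : ∀ x ∈ S, ∀ y, p.lt y x → y ∈ S) :
    IsStemEmbedding (inducedFinOrd p S) p (finsetEnum S) := by
  refine ⟨finsetEnum_injective, fun _ _ => Iff.rfl, fun i y hy => ?_⟩
  exact ⟨S.equivFin ⟨y, hS _ (S.equivFin.symm i).2 y hy⟩, by simp [finsetEnum]⟩

theorem stemIn_inducedFinOrd {B : FinOrd n} {f : Fin n → α} (hf : IsStemEmbedding B p f)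
    (hfS : ∀ i, f i ∈ S) : StemIn B (inducedFinOrd p S) := by
  set f' : Fin n → Fin S.card := fun i => S.equivFin ⟨f i, hfS i⟩
  have hf' : finsetEnum S ∘ f' = f := funext fun i => by simp [f', finsetEnum]
  rw [← hf'] at hf
  exact (IsStemEmbedding.of_comp (q := inducedFinOrd p S) finsetEnum_injective
    (fun _ _ => Iff.rfl) hf).stemIn

end Induced

theorem exists_stemIn_stems_eq_card_le {n : ℕ} {p : PartialOrder α}
    (hfin : (stems n p).Finite) :
    ∃ (l : ℕ) (q : FinOrd l), StemIn q p ∧ stems n q = stems n p ∧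
      l ≤ (stems n p).ncard * n := by
  classical
  have := hfin.fintype
  choose b hb f hf using fun B : stems n p => (B.2 : QStemIn B.1 p)
  have hf : ∀ B, IsStemEmbedding (b B) p (f B) := hf
  set S : Finset α := Finset.univ.biUnion fun B => Finset.univ.image (f B)
  have hfS : ∀ B i, f B i ∈ S := fun B i => by simp [S]
  have hS_down : ∀ x ∈ S, ∀ y, p.lt y x → y ∈ S := by
    intro x hx y hy
    obtain ⟨B, -, i, -, rfl⟩ : ∃ B ∈ Finset.univ, ∃ i ∈ Finset.univ, f B i = x := by
      simpa [S] using hx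
    obtain ⟨j, rfl⟩ := (hf B).2.2 i y hy
    exact hfS B j
  refine ⟨S.card, inducedFinOrd p S, (isStemEmbedding_inducedFinOrd hS_down).stemIn,
    (stems_subset_of_stemIn (isStemEmbedding_inducedFinOrd hS_down).stemIn).antisymm
      fun B hB => ⟨b ⟨B, hB⟩, hb _, stemIn_inducedFinOrd (hf _) (hfS _)⟩, ?_⟩
  calc S.card ≤ ∑ B, (Finset.univ.image (f B)).card := Finset.card_biUnion_le
    _ ≤ ∑ _B : stems n p, n := Finset.sum_le_sum fun B _ =>
        Finset.card_image_le.trans (Finset.card_fin n).le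
    _ = (stems n p).ncard * n := by
        rw [Finset.sum_const, smul_eq_mul, Finset.card_univ, Set.ncard_eq_toFinset_card',
          Set.toFinset_card]

/-- Let `Γ = {A¹, …, Aᵏ}` be a nonempty finite set of
`n`-orders and let `C` (a finite order of cardinality `m`) be a minimal
certificate of `Γ` — i.e. a finite certificate such that any finite certificate
of `Γ` which is a stem in `C` has the same cardinality (hence is isomorphic to
`C`). Then `n ≤ m ≤ k·n`, and `m = n` if and only if `k = 1`. -/
theorem minimal_certificate_cardinality {n k : ℕ} (Γ : Set (NOrder n))
    (hΓfin : Γ.Finite) (hk : Γ.ncard = k) (hne : Γ.Nonempty)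
    {m : ℕ} (C : FinOrd m)
    (hcert : stems n C = Γ)
    (hmin : ∀ (m' : ℕ) (q : FinOrd m'), stems n q = Γ → StemIn q C → m' = m) :
    n ≤ m ∧ m ≤ k * n ∧ (m = n ↔ k = 1) := by
  obtain ⟨A, hA⟩ := hne
  obtain ⟨b, -, hbC⟩ : A ∈ stems n C := hcert ▸ hA
  have hnm : n ≤ m := by simpa using hbC.card_le
  obtain ⟨l, q, hqC, hq, hl⟩ := exists_stemIn_stems_eq_card_le (hcert ▸ hΓfin)
  rw [hcert] at hq
  rw [hcert, hk] at hl
  have hmkn : m ≤ k * n := hmin l q hq hqC ▸ hl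
  refine ⟨hnm, hmkn, fun hmn => ?_, fun hk1 => ?_⟩
  · subst hmn
    rw [← hk, ← hcert, stems_eq_singleton]
    exact Set.ncard_singleton _
  · subst hk1
    omega
end

section
/- Given an infinite path P = {Γ₁, Γ₂, …} in covtree, there exists a strictly increasing sequence m₁ < m₂ < … of natural numbers and labeled causets C̃_{m₁} ⊂ C̃_{m₂} ⊂ … such that |C̃_{m_k}| = m_k, each C̃_{m_k} is a stem in C̃_{m_{k+1}}, and C̃_{m_{k+1}} is a labeled certificate of Γ_{m_k}; the union of this nested sequence is a labeled certificate of the whole path P. -/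
/-- An infinite path in covtree, starting at the root: for each `n` a node of
covtree at level `n` (a nonempty set of `n`-orders admitting a certificate),
each node being directly below the next via the `O₋` operation.  (Level `0`
carries the trivial node consisting of the empty order.) -/
structure CovPath where
  node : (n : ℕ) → Set (NOrder n)
  nonempty : ∀ n, (node n).Nonempty
  isNode : ∀ n, IsNode n (node n)
  link : ∀ n, Ominus (n + 1) (node (n + 1)) = node n


/-- A labeled causet of cardinality `n`: a partial order on `{0, …, n-1}` such
that `i ≺ j` implies `i < j`. -/
def LabCauset (n : ℕ) := {p : FinOrd n // ∀ i j : Fin n, p.lt i j → (i : ℕ) < (j : ℕ)}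

/-!
A certificate of a node certifies every lower node as well: in a past-finite order each
`n`-stem grows to an `(n+1)`-stem by adjoining a minimal element outside it, so the `n`-stems
are obtained from the `(n+1)`-stems by `O₋`. Now start from a labeled causet whose class lies
in the node at its own size. A certificate of a high enough level contains it, together with
copies of all elements of the nodes up to one level above it, inside one finite stem; labeling
that stem naturally, extending the given labels, gives a larger labeled causet of the same kind.
The union of the resulting chain is a labeled order `q` on `ℕ` whose `n`-stems are exactly `Γₙ`.
As there are only finitely many `n`-orders, all `n`-stems of `q` already occur in some initial
segment of `q`; this dictates how fast the sizes `m_k` must grow.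
-/

open Function Set Filter

section Stems

variable {α : Type*} {n m : ℕ}

def IsDownClosed (p : PartialOrder α) (S : Set α) : Prop :=
  ∀ x ∈ S, ∀ y, p.lt y x → y ∈ S

structure IsStemEmb (b : FinOrd n) (p : PartialOrder α) (f : Fin n → α) : Prop where
  injective : Injective f
  le_iff : ∀ i j, b.le i j ↔ p.le (f i) (f j)
  downClosed : IsDownClosed p (range f)

theorem stemIn_iff {b : FinOrd n} {p : PartialOrder α} : StemIn b p ↔ ∃ f, IsStemEmb b p f :=
  ⟨fun ⟨f, hinj, hle, hlow⟩ => ⟨f, hinj, hle, fun _ ⟨i, hi⟩ y hy => hlow i y (hi ▸ hy)⟩,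
    fun ⟨f, h⟩ => ⟨f, h.injective, h.le_iff, fun i y hy => h.downClosed _ ⟨i, rfl⟩ y hy⟩⟩

namespace IsStemEmb

variable {b : FinOrd n} {t : FinOrd m} {p : PartialOrder α} {f : Fin n → α}

theorem stemIn (h : IsStemEmb b p f) : StemIn b p := stemIn_iff.2 ⟨f, h⟩

theorem lt_iff (h : IsStemEmb b p f) (i j : Fin n) : b.lt i j ↔ p.lt (f i) (f j) := by
  rw [b.lt_iff_le_not_ge, p.lt_iff_le_not_ge, h.le_iff, h.le_iff]

theorem comp {g : Fin n → Fin m} (hg : IsStemEmb b t g) {h : Fin m → α} (hh : IsStemEmb t p h) :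
    IsStemEmb b p (h ∘ g) where
  injective := hh.injective.comp hg.injective
  le_iff i j := (hg.le_iff i j).trans (hh.le_iff _ _)
  downClosed := by
    rintro _ ⟨i, rfl⟩ y hy
    obtain ⟨j, rfl⟩ := hh.downClosed _ ⟨g i, rfl⟩ y hy
    obtain ⟨k, rfl⟩ := hg.downClosed _ ⟨i, rfl⟩ j ((hh.lt_iff _ _).2 hy)
    exact ⟨k, rfl⟩

theorem congr_left {b' : FinOrd n} (e : b.le ≃r b'.le) (h : IsStemEmb b p f) :
    IsStemEmb b' p (f ∘ e.symm) where
  injective := h.injective.comp e.symm.injective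
  le_iff i j := e.symm.map_rel_iff.symm.trans (h.le_iff _ _)
  downClosed := by
    rw [range_comp, e.symm.surjective.range_eq, image_univ]
    exact h.downClosed

theorem stemIn_of_range_subset (hf : IsStemEmb b p f) {ℓ : Fin m → α} (hℓ : IsStemEmb t p ℓ)
    (hsub : range f ⊆ range ℓ) : StemIn b t := by
  choose g hg using fun i => hsub ⟨i, rfl⟩
  refine stemIn_iff.2 ⟨g, fun i j hij => hf.injective ?_, fun i j => ?_, ?_⟩
  · rw [← hg i, ← hg j, hij]
  · rw [hf.le_iff, ← hg i, ← hg j, hℓ.le_iff]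
  · rintro _ ⟨i, rfl⟩ y hy
    have hy' : p.lt (ℓ y) (f i) := hg i ▸ (hℓ.lt_iff _ _).1 hy
    obtain ⟨j, hj⟩ := hf.downClosed _ ⟨i, rfl⟩ _ hy'
    exact ⟨j, hℓ.injective (by rw [hg, hj])⟩

end IsStemEmb

instance (n : ℕ) : Finite (FinOrd n) :=
  Finite.of_injective (fun p : FinOrd n => p.le) fun _ _ h => PartialOrder.ext fun x y => by
    simp only at h; rw [h]

instance (n : ℕ) : Finite (NOrder n) := Quotient.finite _

variable {p : PartialOrder α}

theorem qStemIn_mk {b : FinOrd n} : QStemIn ⟦b⟧ p ↔ StemIn b p := by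
  refine ⟨fun ⟨c, hc, hst⟩ => ?_, fun h => ⟨b, rfl, h⟩⟩
  obtain ⟨f, hf⟩ := stemIn_iff.1 hst
  obtain ⟨e⟩ : OrdIso c b := Quotient.exact hc
  exact (hf.congr_left e).stemIn

theorem QStemIn.trans {B : NOrder n} {t : FinOrd m} (hB : QStemIn B t) (ht : StemIn t p) :
    QStemIn B p := by
  obtain ⟨b, hb, hst⟩ := hB
  obtain ⟨f, hf⟩ := stemIn_iff.1 hst
  obtain ⟨g, hg⟩ := stemIn_iff.1 ht
  exact ⟨b, hb, (hf.comp hg).stemIn⟩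

theorem stems_subset_of_stemIn_s12 {t : FinOrd m} (ht : StemIn t p) (n : ℕ) :
    stems n t ⊆ stems n p :=
  fun _ hB => QStemIn.trans hB ht

theorem mem_stems_of_nStemIn {B : NOrder n} {A : NOrder m} (h : NStemIn B A)
    (hA : A ∈ stems m p) : B ∈ stems n p := by
  obtain ⟨t, rfl, hBt⟩ := h
  exact hBt.trans (qStemIn_mk.1 hA)

theorem le_of_mem_stems {t : FinOrd m} {B : NOrder n} (hB : B ∈ stems n t) : n ≤ m := by
  obtain ⟨b, -, hst⟩ := hB
  obtain ⟨f, hf⟩ := stemIn_iff.1 hst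
  exact Fin.le_of_injective f hf.injective

end Stems

def FinOrd.IsPrefix {m n : ℕ} (t : FinOrd m) (t' : FinOrd n) : Prop :=
  ∃ h : m ≤ n, ∀ i j, t.le i j ↔ t'.le (Fin.castLE h i) (Fin.castLE h j)

theorem FinOrd.IsPrefix.trans {l m n : ℕ} {t : FinOrd l} {t' : FinOrd m} {t'' : FinOrd n}
    (h : t.IsPrefix t') (h' : t'.IsPrefix t'') : t.IsPrefix t'' :=
  ⟨h.1.trans h'.1, fun i j => (h.2 i j).trans (h'.2 _ _)⟩

section Induced

variable {α : Type*} {n : ℕ}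

abbrev FinOrd.induced (p : PartialOrder α) (f : Fin n → α) (hf : Injective f) : FinOrd n :=
  @PartialOrder.lift _ _ p f hf

theorem isStemEmb_induced {p : PartialOrder α} {f : Fin n → α} (hf : Injective f)
    (hlow : IsDownClosed p (range f)) : IsStemEmb (FinOrd.induced p f hf) p f :=
  ⟨hf, fun _ _ => Iff.rfl, hlow⟩

def IsNatural (p : PartialOrder α) (f : Fin n → α) : Prop :=
  ∀ i j, p.lt (f i) (f j) → i < j

theorem IsStemEmb.isNatural {b : FinOrd n} {p : PartialOrder α} {f : Fin n → α}
    (hf : IsStemEmb b p f) (hb : ∀ i j : Fin n, b.lt i j → (i : ℕ) < (j : ℕ)) : IsNatural p f :=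
  fun i j h => hb i j ((hf.lt_iff i j).2 h)

end Induced

section DownClosed

variable {α : Type*} {p : PartialOrder α}

theorem IsDownClosed.union {S T : Set α} (hS : IsDownClosed p S) (hT : IsDownClosed p T) :
    IsDownClosed p (S ∪ T) := by
  rintro x (hx | hx) y hy
  exacts [Or.inl (hS x hx y hy), Or.inr (hT x hx y hy)]

theorem isDownClosed_iUnion {ι : Sort*} {S : ι → Set α} (hS : ∀ i, IsDownClosed p (S i)) :
    IsDownClosed p (⋃ i, S i) := by
  simp only [IsDownClosed, mem_iUnion]
  rintro x ⟨i, hx⟩ y hy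
  exact ⟨i, hS i x hx y hy⟩

theorem exists_minimal_notMem {S D : Set α} (hS : S.Finite) (hSlow : IsDownClosed p S)
    {y : α} (hyS : y ∈ S) (hyD : y ∉ D) : ∃ x ∈ S, x ∉ D ∧ ∀ z, p.lt z x → z ∈ D := by
  let _ := p
  obtain ⟨x, -, hmin⟩ := (hS.subset sdiff_subset).exists_le_minimal (mem_sdiff_of_mem hyS hyD)
  refine ⟨x, hmin.prop.1, hmin.prop.2, fun z hz => by_contra fun hzD => ?_⟩
  exact hz.not_ge (hmin.le_of_le ⟨hSlow x hmin.prop.1 z hz, hzD⟩ hz.le)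

theorem isDownClosed_range_snoc {n : ℕ} {f : Fin n → α} (hf : IsDownClosed p (range f)) {x : α}
    (hx : ∀ z, p.lt z x → z ∈ range f) :
    IsDownClosed p (range (Fin.snoc f x : Fin (n + 1) → α)) := by
  rw [Fin.range_snoc]
  rintro w (rfl | hw) z hz
  exacts [Or.inr (hx z hz), Or.inr (hf w hw z hz)]

theorem IsNatural.snoc {n : ℕ} {f : Fin n → α} (hnat : IsNatural p f)
    (hf : IsDownClosed p (range f)) {x : α} (hx : x ∉ range f) :
    IsNatural p (Fin.snoc f x : Fin (n + 1) → α) := by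
  let _ := p
  intro i j hij
  induction j using Fin.lastCases with
  | last =>
    refine lt_of_le_of_ne (Fin.le_last i) fun h => ?_
    subst h
    exact lt_irrefl _ hij
  | cast j =>
    induction i using Fin.lastCases with
    | last =>
      rw [Fin.snoc_last, Fin.snoc_castSucc] at hij
      exact absurd (hf _ ⟨j, rfl⟩ x hij) hx
    | cast i =>
      rw [Fin.snoc_castSucc, Fin.snoc_castSucc] at hij
      exact Fin.castSucc_lt_castSucc_iff.2 (hnat i j hij)

/-- Append a minimal unlabelled element, one at a time. -/
theorem exists_natural_extension {E : Set α} (hE : E.Finite) (hElow : IsDownClosed p E) {s : ℕ}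
    (f : Fin s → α) (hf : Injective f) (hnat : IsNatural p f) (hlow : IsDownClosed p (range f))
    (hfE : range f ⊆ E) : ∃ (s' : ℕ) (h : s ≤ s') (ℓ : Fin s' → α), Injective ℓ ∧
      IsNatural p ℓ ∧ range ℓ = E ∧ ∀ i, ℓ (Fin.castLE h i) = f i := by
  generalize hk : (E \ range f).ncard = k
  induction k generalizing s f with
  | zero =>
    have hEf : E \ range f = ∅ := (ncard_eq_zero (hE.subset sdiff_subset)).1 hk
    exact ⟨s, le_rfl, f, hf, hnat, hfE.antisymm (sdiff_eq_empty.1 hEf), fun _ => rfl⟩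
  | succ k ih =>
    obtain ⟨y, hyE, hyf⟩ := nonempty_of_ncard_ne_zero (hk.trans_ne k.succ_ne_zero)
    obtain ⟨x, hxE, hxf, hxlow⟩ := exists_minimal_notMem hE hElow hyE hyf
    have hk' : (E \ range (Fin.snoc f x : Fin (s + 1) → α)).ncard = k := by
      rw [Fin.range_snoc, ← union_singleton, ← sdiff_sdiff,
        ncard_sdiff_singleton_of_mem (mem_sdiff_of_mem hxE hxf), hk, Nat.add_sub_cancel]
    obtain ⟨s', h, ℓ, hℓ, hℓnat, hℓE, hℓf⟩ := ih _ (Fin.snoc_injective_iff.2 ⟨hf, hxf⟩)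
      (hnat.snoc hlow hxf) (isDownClosed_range_snoc hlow hxlow)
      (by rw [Fin.range_snoc]; exact insert_subset hxE hfE) hk'
    refine ⟨s', (Nat.le_succ s).trans h, ℓ, hℓ, hℓnat, hℓE, fun i => ?_⟩
    simpa using hℓf i.castSucc

end DownClosed

section Certificates

variable {α : Type*} {p : PartialOrder α}

theorem exists_notMem_range {n m : ℕ} {g : Fin m → α} (hg : Injective g) (f : Fin n → α)
    (hnm : n < m) : ∃ i, g i ∉ range f := by
  by_contra! h
  choose k hk using h
  have hk_inj : Injective k := fun i j hij => hg (by rw [← hk i, ← hk j, hij])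
  exact hnm.not_ge (Fin.le_of_injective k hk_inj)

theorem stems_eq_ominus_stems (hp : PastFinite p) {n : ℕ} (hne : (stems (n + 1) p).Nonempty) :
    stems n p = Ominus (n + 1) (stems (n + 1) p) := by
  refine Subset.antisymm (fun B hB => ?_) fun B ⟨A, hA, hBA⟩ => mem_stems_of_nStemIn hBA hA
  obtain ⟨b, rfl, hb⟩ := hB
  obtain ⟨f, hf⟩ := stemIn_iff.1 hb
  obtain ⟨_, _, -, hst⟩ := hne
  obtain ⟨g, hg⟩ := stemIn_iff.1 hst
  obtain ⟨i, hi⟩ := exists_notMem_range hg.injective f n.lt_succ_self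
  let _ := p
  have hfin : (Iic (g i)).Finite := by
    rw [← Iio_insert]
    exact (hp (g i)).insert _
  have hlow : IsDownClosed p (Iic (g i)) := fun x hx z hz => hz.le.trans hx
  obtain ⟨x, -, hxf, hxlow⟩ := exists_minimal_notMem hfin hlow self_mem_Iic hi
  have hinj : Injective (Fin.snoc f x : Fin (n + 1) → α) := Fin.snoc_injective_iff.2 ⟨hf.1, hxf⟩
  have hemb := isStemEmb_induced hinj (isDownClosed_range_snoc hf.downClosed hxlow)
  refine ⟨_, qStemIn_mk.2 hemb.stemIn, _, rfl, qStemIn_mk.2 ?_⟩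
  exact hf.stemIn_of_range_subset hemb (by rw [Fin.range_snoc]; exact subset_insert _ _)

theorem exists_finite_cover_of_mem_stems {ι : Type*} [Finite ι] {d : ι → ℕ}
    (A : (i : ι) → NOrder (d i)) (hA : ∀ i, A i ∈ stems (d i) p) :
    ∃ E : Set α, E.Finite ∧ IsDownClosed p E ∧ E.ncard ≤ ∑ᶠ i, d i ∧
      ∀ i, ∃ (b : FinOrd (d i)) (g : Fin (d i) → α),
        ⟦b⟧ = A i ∧ IsStemEmb b p g ∧ range g ⊆ E := by
  choose b hb hst using hA
  choose g hg using fun i => stemIn_iff.1 (hst i)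
  refine ⟨⋃ i, range (g i), finite_iUnion fun i => finite_range _,
    isDownClosed_iUnion fun i => (hg i).downClosed, ?_,
    fun i => ⟨b i, g i, hb i, hg i, subset_iUnion (fun i => range (g i)) i⟩⟩
  calc (⋃ i, range (g i)).ncard ≤ ∑ᶠ i, (range (g i)).ncard := ncard_iUnion_le_of_finite _
    _ = ∑ᶠ i, d i := finsum_congr fun i => by
        rw [ncard_range_of_injective (hg i).injective, Nat.card_fin]

end Certificates

namespace CovPath

variable (P : CovPath) {α : Type*} {p : PartialOrder α}

theorem stems_eq_node_of_le (hp : PastFinite p) {N : ℕ} (hN : stems N p = P.node N) {n : ℕ}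
    (hn : n ≤ N) : stems n p = P.node n := by
  induction hn using Nat.decreasingInduction with
  | self => exact hN
  | of_succ k _ ih =>
    rw [stems_eq_ominus_stems hp (ih ▸ P.nonempty (k + 1)), ih]
    exact P.link k

theorem exists_certificate_le (N : ℕ) :
    ∃ (α : Type) (p : PartialOrder α), ∀ n ≤ N, stems n p = P.node n := by
  obtain ⟨-, α, p, -, hp, hN⟩ := P.isNode N
  exact ⟨α, p, fun n => P.stems_eq_node_of_le hp hN⟩

theorem stems_subset_node {N : ℕ} {t : FinOrd N} (ht : ⟦t⟧ ∈ P.node N) {n : ℕ} (hn : n ≤ N) :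
    stems n t ⊆ P.node n := by
  obtain ⟨α, p, hp⟩ := P.exists_certificate_le N
  rw [← hp N le_rfl] at ht
  rw [← hp n hn]
  exact stems_subset_of_stemIn_s12 (qStemIn_mk.1 ht) n

structure NodeCauset where
  size : ℕ
  causet : LabCauset size
  mem_node : ⟦causet.1⟧ ∈ P.node size

instance : Nonempty P.NodeCauset := by
  obtain ⟨A, hA⟩ := P.nonempty 0
  induction A using Quotient.inductionOn with | h a =>
  exact ⟨⟨0, ⟨a, fun i => i.elim0⟩, hA⟩⟩

theorem exists_extension (c : P.NodeCauset) :
    ∃ c' : P.NodeCauset, c.causet.1.IsPrefix c'.causet.1 ∧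
      ∀ n ≤ c.size + 1, P.node n ⊆ stems n c'.causet.1 := by
  classical
  obtain ⟨s, ⟨t, ht⟩, hmem⟩ := c
  let ι := Σ n : Fin (s + 2), P.node n
  set N := s + 1 + ∑ᶠ i : ι, (i.1 : ℕ)
  obtain ⟨α, p, hp⟩ := P.exists_certificate_le N
  have hp' : ∀ n ≤ s + 1, stems n p = P.node n := fun n hn => hp n (by omega)
  rw [← hp' s s.le_succ] at hmem
  obtain ⟨f, hf⟩ := stemIn_iff.1 (qStemIn_mk.1 hmem)
  obtain ⟨E, hEfin, hElow, hEcard, hcover⟩ := exists_finite_cover_of_mem_stems (p := p)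
    (d := fun i : ι => i.1) (fun i => i.2.1)
    fun i => (hp' _ (Nat.le_of_lt_succ i.1.isLt)).symm ▸ i.2.2
  have hlow := hElow.union hf.downClosed
  obtain ⟨s', hss', ℓ, hℓ, hℓnat, hℓE, hℓf⟩ := exists_natural_extension
    (hEfin.union (finite_range f)) hlow f hf.injective (hf.isNatural ht) hf.downClosed
    subset_union_right
  have hℓemb := isStemEmb_induced hℓ (hℓE ▸ hlow)
  have hs' : s' ≤ N := calc
    s' = (range ℓ).ncard := by rw [ncard_range_of_injective hℓ, Nat.card_fin]
    _ ≤ E.ncard + (range f).ncard := hℓE ▸ ncard_union_le _ _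
    _ ≤ N := by rw [ncard_range_of_injective hf.injective, Nat.card_fin]; omega
  refine ⟨⟨s', ⟨FinOrd.induced p ℓ hℓ, hℓnat⟩, ?_⟩, ⟨hss', fun i j => ?_⟩,
    fun n hn A hA => ?_⟩
  · rw [← hp s' hs']
    exact qStemIn_mk.2 hℓemb.stemIn
  · rw [hf.le_iff, ← hℓf i, ← hℓf j]
    rfl
  · obtain ⟨b, g, hb, hg, hgE⟩ := hcover ⟨⟨n, Nat.lt_succ_of_le hn⟩, A, hA⟩
    change ⟦b⟧ = A at hb
    rw [← hb]
    exact qStemIn_mk.2 (hg.stemIn_of_range_subset hℓemb (hℓE ▸ hgE.trans subset_union_left))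

end CovPath

section InitialSegment

variable {q : PartialOrder ℕ}

abbrev initialSeg (q : PartialOrder ℕ) (b : ℕ) : FinOrd b :=
  FinOrd.induced q Fin.val Fin.val_injective

theorem isStemEmb_initialSeg (hq : ∀ i j, q.lt i j → i < j) (b : ℕ) :
    IsStemEmb (initialSeg q b) q Fin.val :=
  isStemEmb_induced _ fun _ ⟨i, hi⟩ y hy => ⟨⟨y, (hq y _ (hi ▸ hy)).trans i.isLt⟩, rfl⟩

theorem initialSeg_stemIn (hq : ∀ i j, q.lt i j → i < j) {a b : ℕ} (hab : a ≤ b) :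
    StemIn (initialSeg q a) (initialSeg q b) :=
  (isStemEmb_initialSeg hq a).stemIn_of_range_subset (isStemEmb_initialSeg hq b)
    fun _ ⟨i, hi⟩ => ⟨Fin.castLE hab i, hi⟩

theorem eventually_stems_initialSeg (hq : ∀ i j, q.lt i j → i < j) (n : ℕ) :
    ∀ᶠ b in atTop, stems n (initialSeg q b) = stems n q := by
  have hmem : ∀ A : NOrder n, ∀ᶠ b in atTop, A ∈ stems n q → A ∈ stems n (initialSeg q b) := by
    intro A
    by_cases hA : A ∈ stems n q
    · obtain ⟨a, rfl, hst⟩ := hA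
      obtain ⟨f, hf⟩ := stemIn_iff.1 hst
      obtain ⟨B, hB⟩ := (finite_range f).bddAbove
      filter_upwards [eventually_gt_atTop B] with b hb _
      refine qStemIn_mk.2 (hf.stemIn_of_range_subset (isStemEmb_initialSeg hq b) ?_)
      rintro _ ⟨i, rfl⟩
      exact ⟨⟨f i, (hB ⟨i, rfl⟩).trans_lt hb⟩, rfl⟩
    · exact Eventually.of_forall fun _ h => absurd h hA
  filter_upwards [eventually_all.2 hmem] with b hb
  exact (stems_subset_of_stemIn_s12 (isStemEmb_initialSeg hq b).stemIn n).antisymm fun A hA => hb A hA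

end InitialSegment

section Limit

variable {s : ℕ → ℕ} {t : (k : ℕ) → FinOrd (s k)}

def limitRel (t : (k : ℕ) → FinOrd (s k)) (i j : ℕ) : Prop :=
  ∀ᶠ k in atTop, ∃ (hi : i < s k) (hj : j < s k), (t k).le ⟨i, hi⟩ ⟨j, hj⟩

/-- Defining `≤` by `∀ᶠ` makes the order axioms hold without any coherence between the
stages. -/
abbrev limitOrd (t : (k : ℕ) → FinOrd (s k)) (hs : Tendsto s atTop atTop) : PartialOrder ℕ where
  le := limitRel t
  lt i j := limitRel t i j ∧ ¬ limitRel t j i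
  lt_iff_le_not_ge _ _ := Iff.rfl
  le_refl i := (hs.eventually_gt_atTop i).mono fun k hk => ⟨hk, hk, (t k).le_refl _⟩
  le_trans i j l hij hjl := (hij.and hjl).mono fun k ⟨⟨hi, _, h₁⟩, ⟨_, hl, h₂⟩⟩ =>
    ⟨hi, hl, (t k).le_trans _ _ _ h₁ h₂⟩
  le_antisymm i j hij hji := by
    obtain ⟨k, ⟨_, _, h₁⟩, ⟨_, _, h₂⟩⟩ := (hij.and hji).exists
    exact congrArg Fin.val ((t k).le_antisymm _ _ h₁ h₂)

theorem limitOrd_le_iff (ht : ∀ k, (t k).IsPrefix (t (k + 1))) (hs : Tendsto s atTop atTop)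
    {k : ℕ} (i j : Fin (s k)) : (limitOrd t hs).le i j ↔ (t k).le i j := by
  have key : ∀ k' ≥ k, (∃ (hi : (i : ℕ) < s k') (hj : (j : ℕ) < s k'),
      (t k').le ⟨i, hi⟩ ⟨j, hj⟩) ↔ (t k).le i j := by
    intro k' hk'
    obtain ⟨h, hiff⟩ : (t k).IsPrefix (t k') := by
      induction k', hk' using Nat.le_induction with
      | base => exact ⟨le_rfl, fun _ _ => Iff.rfl⟩
      | succ k' _ ih => exact ih.trans (ht k')
    exact ⟨fun ⟨_, _, hle⟩ => (hiff i j).2 hle,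
      fun hle => ⟨(Fin.castLE h i).isLt, (Fin.castLE h j).isLt, (hiff i j).1 hle⟩⟩
  refine ⟨fun h => ?_, fun h => eventually_atTop.2 ⟨k, fun k' hk' => (key k' hk').2 h⟩⟩
  obtain ⟨k', h', hk'⟩ := (h.and (eventually_ge_atTop k)).exists
  exact (key k' hk').1 h'

theorem initialSeg_limitOrd (ht : ∀ k, (t k).IsPrefix (t (k + 1))) (hs : Tendsto s atTop atTop)
    (k : ℕ) : initialSeg (limitOrd t hs) (s k) = t k :=
  PartialOrder.ext fun i j => limitOrd_le_iff ht hs i j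

theorem limitOrd_lt_imp_lt (ht : ∀ k, (t k).IsPrefix (t (k + 1))) (hs : Tendsto s atTop atTop)
    (hlab : ∀ k (i j : Fin (s k)), (t k).lt i j → (i : ℕ) < j) :
    ∀ i j, (limitOrd t hs).lt i j → i < j := by
  intro i j hij
  obtain ⟨k, hk⟩ := (hs.eventually_gt_atTop (max i j)).exists
  have h := hlab k ⟨i, (le_max_left i j).trans_lt hk⟩ ⟨j, (le_max_right i j).trans_lt hk⟩
  rw [← initialSeg_limitOrd ht hs k] at h
  exact h hij

theorem stems_limitOrd (ht : ∀ k, (t k).IsPrefix (t (k + 1))) (hs : Tendsto s atTop atTop)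
    (hlab : ∀ k (i j : Fin (s k)), (t k).lt i j → (i : ℕ) < j) (n : ℕ) :
    stems n (limitOrd t hs) = ⋃ k, stems n (t k) := by
  have hq := limitOrd_lt_imp_lt ht hs hlab
  refine Subset.antisymm (fun A hA => ?_) (iUnion_subset fun k => ?_)
  · obtain ⟨k, hk⟩ :=
      (hs.eventually (eventually_stems_initialSeg (q := limitOrd t hs) hq n)).exists
    rw [initialSeg_limitOrd ht hs k] at hk
    exact mem_iUnion.2 ⟨k, hk ▸ hA⟩
  · rw [← initialSeg_limitOrd ht hs k]
    exact stems_subset_of_stemIn_s12 (isStemEmb_initialSeg (q := limitOrd t hs) hq _).stemIn n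

end Limit

theorem CovPath.exists_labeled_certificate (P : CovPath) :
    ∃ q : PartialOrder ℕ, (∀ i j, q.lt i j → i < j) ∧ ∀ n, stems n q = P.node n := by
  choose next hprefix hnext using P.exists_extension
  let c : ℕ → P.NodeCauset := fun k => Nat.rec (Classical.arbitrary _) (fun _ c => next c) k
  have hs : StrictMono fun k => (c k).size := strictMono_nat_of_lt_succ fun k => by
    obtain ⟨A, hA⟩ := P.nonempty ((c k).size + 1)
    exact le_of_mem_stems (hnext (c k) _ le_rfl hA)
  have ht : ∀ k, (c k).causet.1.IsPrefix (c (k + 1)).causet.1 := fun k => hprefix (c k)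
  have hlab := fun k => (c k).causet.2
  refine ⟨limitOrd _ hs.tendsto_atTop, limitOrd_lt_imp_lt ht _ hlab, fun n => ?_⟩
  rw [stems_limitOrd ht _ hlab]
  refine Subset.antisymm (iUnion_subset fun k A hA => ?_) fun A hA => mem_iUnion.2 ⟨n + 1, ?_⟩
  · exact P.stems_subset_node (c k).mem_node (le_of_mem_stems hA) hA
  · exact hnext (c n) n (hs.le_apply.trans (Nat.le_succ _)) hA

/-- Given an infinite path `P = {Γ₁, Γ₂, …}` in covtree,
there is a strictly increasing sequence `m₁ < m₂ < …` of natural numbers and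
labeled causets `C̃_{m₁} ⊂ C̃_{m₂} ⊂ …` with `|C̃_{m_k}| = m_k`, each
`C̃_{m_k}` a stem (initial downward-closed subcauset) in `C̃_{m_{k+1}}`, and
each `C̃_{m_{k+1}}` a labeled certificate of `Γ_{m_k}`; the union of this
nested sequence is a labeled causet on `ℕ` which is a labeled certificate of
the whole path `P`. -/
theorem path_has_labeled_certificate (P : CovPath) :
    ∃ m : ℕ → ℕ, StrictMono m ∧
    ∃ hm : ∀ k, m k ≤ m (k + 1),
    ∃ C : (k : ℕ) → LabCauset (m k),
      (∀ k, ∀ i j : Fin (m k), (C k).val.le i j ↔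
          (C (k + 1)).val.le (Fin.castLE (hm k) i) (Fin.castLE (hm k) j)) ∧
      (∀ k, StemIn (C k).val (C (k + 1)).val) ∧
      (∀ k, stems (m k) (C (k + 1)).val = P.node (m k)) ∧
      ∃ q : PartialOrder ℕ, (∀ i j : ℕ, q.lt i j → i < j) ∧
        (∀ k, ∀ i j : Fin (m k), (C k).val.le i j ↔ q.le (i : ℕ) (j : ℕ)) ∧
        (∀ n : ℕ, stems n q = P.node n) := by
  obtain ⟨q, hq, hstems⟩ := P.exists_labeled_certificate
  choose next hnext hgood using fun M =>
    ((eventually_gt_atTop M).and (eventually_stems_initialSeg hq M)).exists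
  let m : ℕ → ℕ := fun k => Nat.rec 0 (fun _ b => next b) k
  have hm : StrictMono m := strictMono_nat_of_lt_succ fun k => hnext (m k)
  refine ⟨m, hm, fun k => (hm k.lt_succ_self).le,
    fun k => ⟨initialSeg q (m k), fun i j => hq i.1 j.1⟩, fun _ _ _ => Iff.rfl,
    fun k => initialSeg_stemIn hq (hm k.lt_succ_self).le,
    fun k => (hgood (m k)).trans (hstems _), q, hq, fun _ _ _ => Iff.rfl, hstems⟩
end
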